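/- arXiv:2312.08784 — 5 statements merged into one kernel-verified Lean document; each statement's English description precedes it below -/
import Mathlib

section
/- Let α ∈ (1/2,1), σ > 0 and φ(t) = ασ(1+σt)^{-(α+1)}. There exists a constant C > 0 such that for every ζ ∈ (0,1) and every t ≥ 0, the resolvent R_ζ(t) = ∑_{k=1}^∞ ζ^k φ^{*k}(t) satisfies R_ζ(t) ≤ C (1+t)^{α−1}. -/
open MeasureTheory Real Filter Set

/-- Convolution of two functions on `[0,∞)`: `(f * g)(t) = ∫_0^t f(t-s) g(s) ds`. -/
noncomputable def conv (f g : ℝ → ℝ) : ℝ → ℝ := fun t => ∫ s in (0:ℝ)..t, f (t - s) * g s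

/-- Convolution powers: `convPow f k = f^{*(k+1)}`, i.e. `convPow f 0 = f`. -/
noncomputable def convPow (f : ℝ → ℝ) : ℕ → ℝ → ℝ
  | 0 => f
  | (k + 1) => conv f (convPow f k)

/-!
If `U ≥ 0` is a bounded supersolution, `f + f * U ≤ U` on `[0,∞)`, then for `ζ ≤ 1` the partial
sums `S_n = ∑_{k<n} ζ^{k+1} f^{*(k+1)}` satisfy `S_{n+1} = ζ f + ζ (f * S_n) ≤ f + f * U ≤ U` by
induction on `n`, so the resolvent is bounded by `U` uniformly in `ζ`.

For the Lomax kernel `φ`, `U(t) = α(1+σ)(1+t)^{α-1}` is such a supersolution: `φ * (1+·)^{α-1}` has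
the antiderivative `σ/(1+σ+σt) · (1+s)^α (1+σ(t-s))^{-α}`, which gives it in closed form, and the
inequality follows from `1 + σ + σt ≤ (1+σ)(1+σt)`.
-/

section Convolution

variable {f g h : ℝ → ℝ} {M B t : ℝ}

theorem measurable_conv (hf : Measurable f) (hg : Measurable g) : Measurable (conv f g) := by
  set F : ℝ × ℝ → ℝ := fun p => f (p.1 - p.2) * g p.2
  have hF : StronglyMeasurable F :=
    ((hf.comp (measurable_fst.sub measurable_snd)).mul (hg.comp measurable_snd)).stronglyMeasurable
  have hpos : MeasurableSet {p : ℝ × ℝ | p.2 ∈ Ioc 0 p.1} :=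
    (measurableSet_lt measurable_const measurable_snd).inter
      (measurableSet_le measurable_snd measurable_fst)
  have hneg : MeasurableSet {p : ℝ × ℝ | p.2 ∈ Ioc p.1 0} :=
    (measurableSet_lt measurable_fst measurable_snd).inter
      (measurableSet_le measurable_snd measurable_const)
  have hconv : conv f g = fun t =>
      (∫ s, {p : ℝ × ℝ | p.2 ∈ Ioc 0 p.1}.indicator F (t, s)) -
        ∫ s, {p : ℝ × ℝ | p.2 ∈ Ioc p.1 0}.indicator F (t, s) := by
    funext t
    simp only [conv, intervalIntegral, ← integral_indicator measurableSet_Ioc]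
    rfl
  rw [hconv]
  exact ((hF.indicator hpos).integral_prod_right').measurable.sub
    ((hF.indicator hneg).integral_prod_right').measurable

theorem conv_nonneg (hf : ∀ s, 0 ≤ s → 0 ≤ f s) (hg : ∀ s, 0 ≤ s → 0 ≤ g s)
    (ht : 0 ≤ t) : 0 ≤ conv f g t :=
  intervalIntegral.integral_nonneg ht fun s hs =>
    mul_nonneg (hf _ (sub_nonneg.2 hs.2)) (hg s hs.1)

theorem conv_const_mul (c : ℝ) : conv f (fun s => c * g s) t = c * conv f g t := by
  simp only [conv, mul_left_comm _ c]
  exact intervalIntegral.integral_const_mul c _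

theorem conv_finset_sum {ι : Type*} {g : ι → ℝ → ℝ} (S : Finset ι)
    (hg : ∀ i ∈ S, IntervalIntegrable (fun s => f (t - s) * g i s) volume 0 t) :
    conv f (fun s => ∑ i ∈ S, g i s) t = ∑ i ∈ S, conv f (g i) t := by
  simp only [conv, Finset.mul_sum]
  exact intervalIntegral.integral_finsetSum hg

theorem conv_mono (hf : ∀ s, 0 ≤ s → 0 ≤ f s) (ht : 0 ≤ t)
    (hg : IntervalIntegrable (fun s => f (t - s) * g s) volume 0 t)
    (hh : IntervalIntegrable (fun s => f (t - s) * h s) volume 0 t)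
    (hgh : ∀ s ∈ Icc 0 t, g s ≤ h s) : conv f g t ≤ conv f h t :=
  intervalIntegral.integral_mono_on ht hg hh fun s hs =>
    mul_le_mul_of_nonneg_left (hgh s hs) (hf _ (sub_nonneg.2 hs.2))

theorem intervalIntegrable_conv_integrand (hf : Measurable f) (hf0 : ∀ s, 0 ≤ s → 0 ≤ f s)
    (hfM : ∀ s, 0 ≤ s → f s ≤ M) (hg : Measurable g) (hgB : ∀ s ∈ Icc 0 t, |g s| ≤ B)
    (ht : 0 ≤ t) : IntervalIntegrable (fun s => f (t - s) * g s) volume 0 t := by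
  rw [intervalIntegrable_iff_integrableOn_Ioc_of_le ht]
  refine IntegrableOn.of_bound measure_Ioc_lt_top
    ((hf.comp (measurable_const.sub measurable_id)).mul hg).aestronglyMeasurable (M * B) ?_
  filter_upwards [ae_restrict_mem measurableSet_Ioc] with s hs
  have hts : 0 ≤ t - s := sub_nonneg.2 hs.2
  rw [Real.norm_eq_abs, abs_mul, abs_of_nonneg (hf0 _ hts)]
  exact mul_le_mul (hfM _ hts) (hgB s (Ioc_subset_Icc_self hs)) (abs_nonneg _)
    ((hf0 0 le_rfl).trans (hfM 0 le_rfl))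

theorem conv_le_mul (hf0 : ∀ s, 0 ≤ s → 0 ≤ f s) (hfM : ∀ s, 0 ≤ s → f s ≤ M)
    (hg : IntervalIntegrable (fun s => f (t - s) * g s) volume 0 t)
    (hgB : ∀ s ∈ Icc 0 t, g s ≤ B) (hB : 0 ≤ B) (ht : 0 ≤ t) :
    conv f g t ≤ M * B * t := by
  calc conv f g t ≤ ∫ _ in (0:ℝ)..t, M * B :=
        intervalIntegral.integral_mono_on ht hg intervalIntegrable_const fun s hs =>
          have hts : 0 ≤ t - s := sub_nonneg.2 hs.2
          (mul_le_mul_of_nonneg_left (hgB s hs) (hf0 _ hts)).trans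
            (mul_le_mul_of_nonneg_right (hfM _ hts) hB)
    _ = M * B * t := by simp only [intervalIntegral.integral_const, sub_zero, smul_eq_mul]; ring

end Convolution

section ConvolutionPowers

variable {f : ℝ → ℝ} {M t : ℝ}

theorem measurable_convPow (hf : Measurable f) : ∀ k, Measurable (convPow f k)
  | 0 => hf
  | k + 1 => measurable_conv hf (measurable_convPow hf k)

theorem convPow_nonneg (hf0 : ∀ s, 0 ≤ s → 0 ≤ f s) :
    ∀ k {t : ℝ}, 0 ≤ t → 0 ≤ convPow f k t
  | 0, t, ht => hf0 t ht
  | k + 1, _, ht => conv_nonneg hf0 (fun _ hs => convPow_nonneg hf0 k hs) ht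

theorem convPow_le (hf : Measurable f) (hf0 : ∀ s, 0 ≤ s → 0 ≤ f s)
    (hfM : ∀ s, 0 ≤ s → f s ≤ M) (k : ℕ) {T : ℝ} (ht : t ∈ Icc 0 T) :
    convPow f k t ≤ M * (M * T) ^ k := by
  have hM : 0 ≤ M := (hf0 0 le_rfl).trans (hfM 0 le_rfl)
  have hT : 0 ≤ T := ht.1.trans ht.2
  induction k generalizing t with
  | zero => rw [pow_zero, mul_one]; exact hfM t ht.1
  | succ k ih =>
    have hbound : ∀ s ∈ Icc 0 t, convPow f k s ≤ M * (M * T) ^ k := fun s hs =>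
      ih ⟨hs.1, hs.2.trans ht.2⟩
    have hint : IntervalIntegrable (fun s => f (t - s) * convPow f k s) volume 0 t :=
      intervalIntegrable_conv_integrand hf hf0 hfM (measurable_convPow hf k)
        (fun s hs => by rw [abs_of_nonneg (convPow_nonneg hf0 k hs.1)]; exact hbound s hs) ht.1
    calc convPow f (k + 1) t ≤ M * (M * (M * T) ^ k) * t :=
          conv_le_mul hf0 hfM hint hbound (by positivity) ht.1
      _ ≤ M * (M * (M * T) ^ k) * T := mul_le_mul_of_nonneg_left ht.2 (by positivity)
      _ = M * (M * T) ^ (k + 1) := by ring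

theorem intervalIntegrable_conv_convPow (hf : Measurable f) (hf0 : ∀ s, 0 ≤ s → 0 ≤ f s)
    (hfM : ∀ s, 0 ≤ s → f s ≤ M) (k : ℕ) (ht : 0 ≤ t) :
    IntervalIntegrable (fun s => f (t - s) * convPow f k s) volume 0 t :=
  intervalIntegrable_conv_integrand hf hf0 hfM (measurable_convPow hf k)
    (fun s hs => by
      rw [abs_of_nonneg (convPow_nonneg hf0 k hs.1)]; exact convPow_le hf hf0 hfM k hs) ht

theorem sum_range_succ_convPow (hf : Measurable f) (hf0 : ∀ s, 0 ≤ s → 0 ≤ f s)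
    (hfM : ∀ s, 0 ≤ s → f s ≤ M) (ζ : ℝ) (n : ℕ) (ht : 0 ≤ t) :
    ∑ k ∈ Finset.range (n + 1), ζ ^ (k + 1) * convPow f k t =
      ζ * f t +
        ζ * conv f (fun s => ∑ k ∈ Finset.range n, ζ ^ (k + 1) * convPow f k s) t := by
  rw [Finset.sum_range_succ', conv_finset_sum, Finset.mul_sum, add_comm]
  · congr 1
    · rw [zero_add, pow_one, convPow]
    · refine Finset.sum_congr rfl fun k _ => ?_
      rw [conv_const_mul, convPow]
      ring
  · intro k _
    simpa only [mul_left_comm] using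
      (intervalIntegrable_conv_convPow hf hf0 hfM k ht).const_mul (ζ ^ (k + 1))

end ConvolutionPowers

section Supersolution

variable {f U : ℝ → ℝ} {M B ζ : ℝ}

theorem sum_convPow_le_of_supersolution (hf : Measurable f) (hf0 : ∀ s, 0 ≤ s → 0 ≤ f s)
    (hfM : ∀ s, 0 ≤ s → f s ≤ M) (hU : Measurable U) (hU0 : ∀ s, 0 ≤ s → 0 ≤ U s)
    (hUB : ∀ s, 0 ≤ s → U s ≤ B) (hsuper : ∀ s, 0 ≤ s → f s + conv f U s ≤ U s)
    (hζ0 : 0 ≤ ζ) (hζ1 : ζ ≤ 1) (n : ℕ) {t : ℝ} (ht : 0 ≤ t) :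
    ∑ k ∈ Finset.range n, ζ ^ (k + 1) * convPow f k t ≤ U t := by
  induction n generalizing t with
  | zero => simpa using hU0 t ht
  | succ n ih =>
    set S := fun s => ∑ k ∈ Finset.range n, ζ ^ (k + 1) * convPow f k s
    have hS0 : ∀ s, 0 ≤ s → 0 ≤ S s := fun s hs =>
      Finset.sum_nonneg fun k _ => mul_nonneg (pow_nonneg hζ0 _) (convPow_nonneg hf0 k hs)
    have hSint : IntervalIntegrable (fun s => f (t - s) * S s) volume 0 t :=
      intervalIntegrable_conv_integrand hf hf0 hfM
        (Finset.measurable_sum _ fun k _ => (measurable_convPow hf k).const_mul _)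
        (fun s hs => by rw [abs_of_nonneg (hS0 s hs.1)]; exact (ih hs.1).trans (hUB s hs.1)) ht
    have hUint : IntervalIntegrable (fun s => f (t - s) * U s) volume 0 t :=
      intervalIntegrable_conv_integrand hf hf0 hfM hU
        (fun s hs => by rw [abs_of_nonneg (hU0 s hs.1)]; exact hUB s hs.1) ht
    calc ∑ k ∈ Finset.range (n + 1), ζ ^ (k + 1) * convPow f k t
        = ζ * f t + ζ * conv f S t := sum_range_succ_convPow hf hf0 hfM ζ n ht
      _ ≤ f t + conv f S t :=
        add_le_add (mul_le_of_le_one_left (hf0 t ht) hζ1)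
          (mul_le_of_le_one_left (conv_nonneg hf0 hS0 ht) hζ1)
      _ ≤ f t + conv f U t :=
        add_le_add_right (conv_mono hf0 ht hSint hUint fun s hs => ih hs.1) _
      _ ≤ U t := hsuper t ht

theorem tsum_convPow_le_of_supersolution (hf : Measurable f) (hf0 : ∀ s, 0 ≤ s → 0 ≤ f s)
    (hfM : ∀ s, 0 ≤ s → f s ≤ M) (hU : Measurable U) (hU0 : ∀ s, 0 ≤ s → 0 ≤ U s)
    (hUB : ∀ s, 0 ≤ s → U s ≤ B) (hsuper : ∀ s, 0 ≤ s → f s + conv f U s ≤ U s)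
    (hζ0 : 0 ≤ ζ) (hζ1 : ζ ≤ 1) {t : ℝ} (ht : 0 ≤ t) :
    ∑' k, ζ ^ (k + 1) * convPow f k t ≤ U t :=
  Real.tsum_le_of_sum_range_le (fun k => mul_nonneg (pow_nonneg hζ0 _) (convPow_nonneg hf0 k ht))
    fun n => sum_convPow_le_of_supersolution hf hf0 hfM hU hU0 hUB hsuper hζ0 hζ1 n ht

end Supersolution

noncomputable def lomaxDensity (α σ : ℝ) (t : ℝ) : ℝ := α * σ * (1 + σ * t) ^ (-(α + 1))

section Lomax

variable {α σ t : ℝ}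

theorem measurable_lomaxDensity : Measurable (lomaxDensity α σ) := by
  unfold lomaxDensity; fun_prop

theorem lomaxDensity_nonneg (hα : 0 ≤ α) (hσ : 0 ≤ σ) (ht : 0 ≤ t) :
    0 ≤ lomaxDensity α σ t := by
  unfold lomaxDensity; positivity

theorem lomaxDensity_le (hα : 0 ≤ α) (hσ : 0 ≤ σ) (ht : 0 ≤ t) :
    lomaxDensity α σ t ≤ α * σ :=
  mul_le_of_le_one_right (by positivity)
    (rpow_le_one_of_one_le_of_nonpos (by nlinarith) (by linarith))

theorem conv_lomaxDensity_rpow (hσ : 0 ≤ σ) (ht : 0 ≤ t) :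
    conv (lomaxDensity α σ) (fun s => (1 + s) ^ (α - 1)) t =
      σ * ((1 + t) ^ α - (1 + σ * t) ^ (-α)) / (1 + σ + σ * t) := by
  have hpos : ∀ s ∈ uIcc 0 t, 0 < 1 + s ∧ 0 < 1 + σ * (t - s) := by
    intro s hs
    rw [uIcc_of_le ht] at hs
    constructor <;> nlinarith [hs.1, hs.2]
  have hderiv : ∀ s ∈ uIcc 0 t,
      HasDerivAt (fun s => σ / (1 + σ + σ * t) * ((1 + s) ^ α * (1 + σ * (t - s)) ^ (-α)))
        (lomaxDensity α σ (t - s) * (1 + s) ^ (α - 1)) s := by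
    intro s hs
    obtain ⟨ha, hb⟩ := hpos s hs
    have hda : HasDerivAt (fun s : ℝ => 1 + s) 1 s := (hasDerivAt_id s).const_add 1
    have hdb : HasDerivAt (fun s : ℝ => 1 + σ * (t - s)) (-σ) s := by
      simpa using (((hasDerivAt_id s).const_sub t).const_mul σ).const_add 1
    refine (((hda.rpow_const (Or.inl ha.ne')).mul
      (hdb.rpow_const (Or.inl hb.ne'))).const_mul _).congr_deriv ?_
    rw [lomaxDensity, show -(α + 1) = -α - 1 by ring, rpow_sub_one hb.ne', rpow_sub_one ha.ne']
    field_simp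
    ring
  have hcont :
      ContinuousOn (fun s => lomaxDensity α σ (t - s) * (1 + s) ^ (α - 1)) (uIcc 0 t) := by
    unfold lomaxDensity
    refine ContinuousOn.mul (continuousOn_const.mul ?_) ?_ <;>
      refine ContinuousOn.rpow_const (by fun_prop) fun s hs => Or.inl ?_
    exacts [(hpos s hs).2.ne', (hpos s hs).1.ne']
  rw [conv, intervalIntegral.integral_eq_sub_of_hasDerivAt hderiv hcont.intervalIntegrable]
  simp only [sub_self, sub_zero, mul_zero, add_zero, one_rpow, one_mul]
  ring

theorem lomaxDensity_add_conv_le (hα : 0 ≤ α) (hσ : 0 ≤ σ) (ht : 0 ≤ t) :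
    lomaxDensity α σ t +
        conv (lomaxDensity α σ) (fun s => α * (1 + σ) * (1 + s) ^ (α - 1)) t ≤
      α * (1 + σ) * (1 + t) ^ (α - 1) := by
  have hb : 0 < 1 + σ * t := by positivity
  rw [conv_const_mul, conv_lomaxDensity_rpow hσ ht, lomaxDensity,
    show (1 + t) ^ α = (1 + t) ^ (α - 1) * (1 + t) by
      rw [rpow_sub_one (by positivity)]; field_simp,
    show (1 + σ * t) ^ (-α) = (1 + σ * t) ^ (-(α + 1)) * (1 + σ * t) by
      rw [neg_add, ← sub_eq_add_neg, rpow_sub_one hb.ne']; field_simp]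
  set Q := (1 + t) ^ (α - 1)
  set P := (1 + σ * t) ^ (-(α + 1))
  have hQ : 0 ≤ Q := by positivity
  have hP : 0 ≤ P := by positivity
  rw [← sub_nonneg]
  calc 0 ≤ (α * (1 + σ) * Q + α * σ ^ 3 * t * P) / (1 + σ + σ * t) := by positivity
    _ = _ := by field_simp; ring

end Lomax

theorem uniform_resolvent_bound
    (α σ : ℝ) (hα : α ∈ Set.Ioo (1/2 : ℝ) 1) (hσ : 0 < σ)
    (φ : ℝ → ℝ) (hφ : ∀ t : ℝ, φ t = α * σ * (1 + σ * t) ^ (-(α + 1))) :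
    ∃ C : ℝ, 0 < C ∧ ∀ ζ ∈ Set.Ioo (0:ℝ) 1, ∀ t : ℝ, 0 ≤ t →
      (∑' k : ℕ, ζ ^ (k + 1) * convPow φ k t) ≤ C * (1 + t) ^ (α - 1) := by
  obtain rfl : φ = lomaxDensity α σ := funext hφ
  obtain ⟨hα0, hα1⟩ : 0 < α ∧ α < 1 := ⟨by linarith [hα.1], hα.2⟩
  have hC : 0 < α * (1 + σ) := by positivity
  refine ⟨α * (1 + σ), hC, fun ζ hζ t ht => ?_⟩
  exact tsum_convPow_le_of_supersolution (U := fun s => α * (1 + σ) * (1 + s) ^ (α - 1))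
    measurable_lomaxDensity (fun _ => lomaxDensity_nonneg hα0.le hσ.le)
    (fun _ => lomaxDensity_le hα0.le hσ.le) (by fun_prop) (fun _ _ => by positivity)
    (fun _ hs => mul_le_of_le_one_right hC.le
      (rpow_le_one_of_one_le_of_nonpos (by linarith) (by linarith)))
    (fun _ => lomaxDensity_add_conv_le hα0.le hσ.le) hζ.1.le hζ.2.le ht
end

section
/- Let α ∈ (0,1) and γ > 0, and let f^{α,γ}(t) = γ t^{α−1} E_{α,α}(−γ t^α) and R^{α,γ}(t) = γ t^{α−1}/Γ(α) for t > 0. If H is locally integrable on [0,∞), then the function X(t) = H(t) + (R^{α,γ} * H)(t) is the unique locally integrable solution of the linear Volterra equation X(t) = H(t) + (f^{α,γ} * X)(t) for almost every t ≥ 0. -/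
open MeasureTheory Real Filter Set

/-- The Mittag-Leffler function `E_{a,k}(x) = ∑_{m=0}^∞ x^m / Γ(a m + k)`. -/
noncomputable def mittagLeffler (a k x : ℝ) : ℝ := ∑' m : ℕ, x ^ m / Real.Gamma (a * m + k)

/-- The Mittag-Leffler density `f^{a,g}(t) = g t^{a-1} E_{a,a}(-g t^a)`. -/
noncomputable def mlDensity (a g t : ℝ) : ℝ := g * t ^ (a - 1) * mittagLeffler a a (-g * t ^ a)

/-- The resolvent kernel `R^{a,g}(t) = g t^{a-1} / Γ(a)`. -/
noncomputable def mlKernel (a g t : ℝ) : ℝ := g * t ^ (a - 1) / Real.Gamma a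

/-!
Write `k = f^{α,γ}` and `r = R^{α,γ}`. Expanding the Mittag-Leffler series,
`k = ∑ₘ γ (-γ)^m g_{α(m+1)}` with the Riemann–Liouville kernels `g_β(t) = t^(β-1) / Γ(β)`,
and `r = γ g_α` is its first term. The Beta integral `g_β * g_δ = g_{β+δ}` turns `k * r`
termwise into minus the tail of the same series: this is the resolvent identity `r = k + k * r`.

The rest only uses that the Volterra convolution is commutative, associative and bilinear on
locally integrable functions (checked on `[0, T]` against the convolution on `ℝ` of the
truncations to `(0, T]`). Then `k * (H + r * H) = k * H + (r - k) * H = r * H`, so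
`X = H + r * H` solves the equation; and if `Z = k * Z`, then
`r * Z = r * (k * Z) = (k * r) * Z = r * Z - k * Z`, so `Z = k * Z = 0`.
-/

open Topology ContinuousLinearMap
open scoped Convolution

lemma Gamma_mul_le_Gamma_add_mul_rpow {a z : ℝ} (ha : 0 < a) (ha1 : a < 1) (hz : 0 < z) :
    z * Gamma z ≤ Gamma (z + a) * (z + a) ^ (1 - a) := by
  have hza : 0 < z + a := by linarith
  have hconv := Gamma_mul_add_mul_le_rpow_Gamma_mul_rpow_Gamma hza (by linarith : 0 < z + a + 1)
    ha (by linarith : 0 < 1 - a) (by ring)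
  have hΓ : Gamma (z + a) ^ a * Gamma (z + a) ^ (1 - a) = Gamma (z + a) := by
    rw [← rpow_add (Gamma_pos_of_pos hza), add_sub_cancel, rpow_one]
  rw [show a * (z + a) + (1 - a) * (z + a + 1) = z + 1 by ring, Gamma_add_one hz.ne',
    Gamma_add_one hza.ne', mul_rpow hza.le (Gamma_pos_of_pos hza).le] at hconv
  calc z * Gamma z ≤ _ := hconv
    _ = Gamma (z + a) ^ a * Gamma (z + a) ^ (1 - a) * (z + a) ^ (1 - a) := by ring
    _ = _ := by rw [hΓ]

lemma summable_pow_div_Gamma {a κ : ℝ} (ha : 0 < a) (ha1 : a < 1) (hκ : 0 < κ) (y : ℝ) :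
    Summable fun m : ℕ => y ^ m / Gamma (a * m + κ) := by
  have hz : ∀ m : ℕ, 0 < a * m + κ := fun m => by positivity
  have hlim : Tendsto (fun m : ℕ => 2 * |y| * (a * m + κ + a) ^ (-a)) atTop (𝓝 0) := by
    have : Tendsto (fun m : ℕ => a * m + κ + a) atTop atTop :=
      tendsto_atTop_add_const_right _ _ (tendsto_atTop_add_const_right _ _
        ((tendsto_natCast_atTop_atTop).const_mul_atTop ha))
    simpa using ((tendsto_rpow_neg_atTop ha).comp this).const_mul (2 * |y|)
  refine summable_of_ratio_norm_eventually_le (r := 1 / 2) (by norm_num) ?_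
  filter_upwards [hlim.eventually (gt_mem_nhds (by norm_num : (0:ℝ) < 1 / 2)),
    (tendsto_natCast_atTop_atTop.const_mul_atTop ha).eventually_ge_atTop a] with m hsmall hlarge
  set z := a * m + κ
  have hz0 : 0 < z := hz m
  have hza : 0 < z + a := by linarith
  -- consecutive terms have ratio `|y| Γ(z) / Γ(z + a) ≤ |y| (z + a)^(1-a) / z ≤ 2 |y| (z + a)^(-a)`
  have hratio : |y| * Gamma z ≤ 1 / 2 * Gamma (z + a) := by
    have hΓ := Gamma_mul_le_Gamma_add_mul_rpow ha ha1 hz0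
    have hsplit : (z + a) ^ (1 - a) = (z + a) * (z + a) ^ (-a) := by
      rw [← rpow_one_add' hza.le (by linarith), show 1 + -a = 1 - a by ring]
    have hG : 0 < Gamma (z + a) := Gamma_pos_of_pos hza
    have hp : 0 < (z + a) ^ (-a) := rpow_pos_of_pos hza _
    refine le_of_mul_le_mul_left ?_ hz0
    calc z * (|y| * Gamma z) = |y| * (z * Gamma z) := by ring
      _ ≤ |y| * (Gamma (z + a) * ((z + a) * (z + a) ^ (-a))) := by rw [← hsplit]; gcongr
      _ ≤ |y| * (Gamma (z + a) * (2 * z * (z + a) ^ (-a))) := by gcongr; linarith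
      _ = z * Gamma (z + a) * (2 * |y| * (z + a) ^ (-a)) := by ring
      _ ≤ z * Gamma (z + a) * (1 / 2) := by gcongr
      _ = z * (1 / 2 * Gamma (z + a)) := by ring
  rw [show a * ((m + 1 : ℕ) : ℝ) + κ = z + a by push_cast; ring, norm_div, norm_div, norm_pow,
    norm_pow, Real.norm_of_nonneg (Gamma_pos_of_pos hza).le,
    Real.norm_of_nonneg (Gamma_pos_of_pos hz0).le, div_le_iff₀ (Gamma_pos_of_pos hza), pow_succ]
  calc ‖y‖ ^ m * ‖y‖ = ‖y‖ ^ m / Gamma z * (|y| * Gamma z) := by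
        rw [Real.norm_eq_abs]; field_simp [(Gamma_pos_of_pos hz0).ne']
    _ ≤ ‖y‖ ^ m / Gamma z * (1 / 2 * Gamma (z + a)) := by gcongr
    _ = _ := by ring

lemma abs_mittagLeffler_le {a κ x y : ℝ} (ha : 0 < a) (ha1 : a < 1) (hκ : 0 < κ)
    (hxy : |x| ≤ y) : |mittagLeffler a κ x| ≤ mittagLeffler a κ y := by
  have hterm (m : ℕ) : ‖x ^ m / Gamma (a * m + κ)‖ ≤ y ^ m / Gamma (a * m + κ) := by
    rw [norm_div, norm_pow, Real.norm_of_nonneg (Gamma_pos_of_pos (by positivity)).le]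
    gcongr
    exact hxy
  exact (norm_tsum_le_tsum_norm (summable_pow_div_Gamma ha ha1 hκ x).norm).trans
    ((summable_pow_div_Gamma ha ha1 hκ x).norm.tsum_le_tsum hterm
      (summable_pow_div_Gamma ha ha1 hκ y))

section VolterraConvolution

variable {f g h : ℝ → ℝ}

lemma conv_eq_integral_Ioo {t : ℝ} (ht : 0 ≤ t) :
    conv f g t = ∫ s in Ioo 0 t, f (t - s) * g s := by
  rw [conv, intervalIntegral.integral_of_le ht, integral_Ioc_eq_integral_Ioo]

lemma conv_comm (f g : ℝ → ℝ) : conv f g = conv g f := by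
  ext t
  have := intervalIntegral.integral_comp_sub_left (fun s => f (t - s) * g s) (a := 0) (b := t) t
  simp only [sub_sub_cancel, sub_self, sub_zero] at this
  rw [conv, conv, ← this]
  simp only [mul_comm]

lemma conv_congr_ae_right {g' : ℝ → ℝ} (hg : g =ᵐ[volume.restrict (Ioi 0)] g') {t : ℝ}
    (ht : 0 ≤ t) : conv f g t = conv f g' t := by
  rw [conv_eq_integral_Ioo ht, conv_eq_integral_Ioo ht]
  refine setIntegral_congr_ae measurableSet_Ioo ?_
  filter_upwards [ae_imp_of_ae_restrict hg] with s hs hst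
  rw [hs hst.1]

lemma conv_congr_ae_left {f' : ℝ → ℝ} (hf : f =ᵐ[volume.restrict (Ioi 0)] f') {t : ℝ}
    (ht : 0 ≤ t) : conv f g t = conv f' g t := by
  rw [conv_comm f, conv_comm f', conv_congr_ae_right hf ht]

lemma locallyIntegrableOn_Ici_iff :
    LocallyIntegrableOn f (Ici 0) ↔ ∀ T : ℝ, 0 ≤ T → IntegrableOn f (Icc 0 T) := by
  refine ⟨fun hf T _ => hf.integrableOn_compact_subset Icc_subset_Ici_self isCompact_Icc,
    fun hf => (locallyIntegrableOn_iff isClosed_Ici.isLocallyClosed).2 fun k hk hkc => ?_⟩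
  obtain ⟨T, hT⟩ := hkc.bddAbove
  exact (hf (max T 0) (le_max_right _ _)).mono_set
    fun s hs => ⟨hk hs, (hT hs).trans (le_max_left _ _)⟩

lemma locallyIntegrableOn_Ici_of_integrableOn_Ioc (hf : ∀ T : ℝ, IntegrableOn f (Ioc 0 T)) :
    LocallyIntegrableOn f (Ici 0) :=
  locallyIntegrableOn_Ici_iff.2 fun T _ => (integrableOn_Icc_iff_integrableOn_Ioc).2 (hf T)

lemma MeasureTheory.LocallyIntegrableOn.integrable_indicator_Ioc
    (hf : LocallyIntegrableOn f (Ici 0)) (T : ℝ) : Integrable ((Ioc 0 T).indicator f) :=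
  (integrable_indicator_iff measurableSet_Ioc).2
    ((hf.integrableOn_compact_subset Icc_subset_Ici_self isCompact_Icc).mono_set
      Ioc_subset_Icc_self)

lemma conv_eq_convolution_indicator {T t : ℝ} (ht : 0 ≤ t) (htT : t ≤ T) :
    conv f g t = ((Ioc 0 T).indicator f ⋆[mul ℝ ℝ] (Ioc 0 T).indicator g) t := by
  have hind : (fun s => (Ioc 0 T).indicator f (t - s) * (Ioc 0 T).indicator g s) =
      (Ioo 0 t).indicator fun s => f (t - s) * g s := by
    ext s
    by_cases hs : s ∈ Ioo 0 t
    · rw [indicator_of_mem hs,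
        indicator_of_mem (show t - s ∈ Ioc 0 T from ⟨by linarith [hs.2], by linarith [hs.1]⟩),
        indicator_of_mem (show s ∈ Ioc 0 T from ⟨hs.1, hs.2.le.trans htT⟩)]
    · rw [indicator_of_notMem hs]
      rcases not_and_or.1 hs with hs | hs
      · rw [indicator_of_notMem (show s ∉ Ioc 0 T from fun h => hs h.1), mul_zero]
      · rw [indicator_of_notMem (show t - s ∉ Ioc 0 T from fun h => hs (by linarith [h.1])),
          zero_mul]
  rw [convolution_mul_swap, hind, integral_indicator measurableSet_Ioo, conv_eq_integral_Ioo ht]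

lemma convolution_eq_zero_of_nonpos (hf : ∀ s ≤ 0, f s = 0) (hg : ∀ s ≤ 0, g s = 0)
    {t : ℝ} (ht : t ≤ 0) : (f ⋆[mul ℝ ℝ] g) t = 0 := by
  rw [convolution_mul]
  refine integral_eq_zero_of_ae (Eventually.of_forall fun s => ?_)
  rcases le_or_gt s 0 with hs | hs
  · simp [hf s hs]
  · simp [hg (t - s) (by linarith)]

lemma convolution_indicator_Ioc_left (hf : ∀ s ≤ 0, f s = 0) (hg : ∀ s ≤ 0, g s = 0)
    {T t : ℝ} (htT : t ≤ T) :
    ((Ioc 0 T).indicator f ⋆[mul ℝ ℝ] g) t = (f ⋆[mul ℝ ℝ] g) t := by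
  rw [convolution_mul, convolution_mul]
  congr 1 with s
  by_cases hs : s ∈ Ioc 0 T
  · rw [indicator_of_mem hs]
  · rw [indicator_of_notMem hs]
    rcases le_or_gt s 0 with hs0 | hs0
    · rw [hf s hs0]
    · rw [hg (t - s) (by linarith [lt_of_not_ge fun h => hs ⟨hs0, h⟩]), mul_zero, mul_zero]

lemma convolution_indicator_Ioc_right (hf : ∀ s ≤ 0, f s = 0) (hg : ∀ s ≤ 0, g s = 0)
    {T t : ℝ} (htT : t ≤ T) :
    (f ⋆[mul ℝ ℝ] (Ioc 0 T).indicator g) t = (f ⋆[mul ℝ ℝ] g) t := by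
  rw [← convolution_flip, flip_mul, convolution_indicator_Ioc_left hg hf htT,
    ← convolution_flip, flip_mul]

lemma ae_restrict_Ici_of_forall_Icc {P : ℝ → Prop}
    (hP : ∀ T : ℝ, ∀ᵐ t ∂volume.restrict (Icc 0 T), P t) :
    ∀ᵐ t ∂volume.restrict (Ici 0), P t := by
  have hcover : Ici (0:ℝ) ⊆ ⋃ n : ℕ, Icc 0 (n : ℝ) :=
    fun t ht => mem_iUnion.2 ⟨⌈t⌉₊, ht, Nat.le_ceil t⟩
  exact ae_restrict_of_ae_restrict_of_subset hcover ((ae_restrict_iUnion_iff _ _).2 fun n => hP n)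

lemma MeasureTheory.LocallyIntegrableOn.conv (hf : LocallyIntegrableOn f (Ici 0))
    (hg : LocallyIntegrableOn g (Ici 0)) : LocallyIntegrableOn (conv f g) (Ici 0) := by
  refine locallyIntegrableOn_Ici_iff.2 fun T _ => ?_
  refine ((hf.integrable_indicator_Ioc T).integrable_convolution (mul ℝ ℝ)
    (hg.integrable_indicator_Ioc T)).integrableOn.congr_fun (fun t ht => ?_) measurableSet_Icc
  exact (conv_eq_convolution_indicator ht.1 ht.2).symm

lemma ae_intervalIntegrable_conv (hf : LocallyIntegrableOn f (Ici 0))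
    (hg : LocallyIntegrableOn g (Ici 0)) :
    ∀ᵐ t ∂volume.restrict (Ici 0),
      IntervalIntegrable (fun s => f (t - s) * g s) volume 0 t := by
  refine ae_restrict_Ici_of_forall_Icc fun T => ?_
  filter_upwards [ae_restrict_of_ae ((hf.integrable_indicator_Ioc T).ae_convolution_exists
    (mul ℝ ℝ) (hg.integrable_indicator_Ioc T)), ae_restrict_mem measurableSet_Icc] with t hex ht
  rw [intervalIntegrable_iff_integrableOn_Ioo_of_le ht.1]
  refine hex.integrable_swap.integrableOn.congr_fun (fun s hs => ?_) measurableSet_Ioo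
  simp only [mul_apply']
  rw [indicator_of_mem
      (show t - s ∈ Ioc 0 T from ⟨by linarith [hs.2], by linarith [hs.1, ht.2]⟩),
    indicator_of_mem (show s ∈ Ioc 0 T from ⟨hs.1, hs.2.le.trans ht.2⟩)]

lemma conv_add_ae (hf : LocallyIntegrableOn f (Ici 0)) (hg : LocallyIntegrableOn g (Ici 0))
    (hh : LocallyIntegrableOn h (Ici 0)) :
    ∀ᵐ t ∂volume.restrict (Ici 0), conv f (g + h) t = conv f g t + conv f h t := by
  filter_upwards [ae_intervalIntegrable_conv hf hg, ae_intervalIntegrable_conv hf hh] with t hfg hfh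
  simp only [conv, Pi.add_apply, mul_add]
  exact intervalIntegral.integral_add hfg hfh

lemma conv_sub_ae (hf : LocallyIntegrableOn f (Ici 0)) (hg : LocallyIntegrableOn g (Ici 0))
    (hh : LocallyIntegrableOn h (Ici 0)) :
    ∀ᵐ t ∂volume.restrict (Ici 0), conv f (g - h) t = conv f g t - conv f h t := by
  filter_upwards [ae_intervalIntegrable_conv hf hg, ae_intervalIntegrable_conv hf hh] with t hfg hfh
  simp only [conv, Pi.sub_apply, mul_sub]
  exact intervalIntegral.integral_sub hfg hfh

lemma MeasureTheory.Integrable.ae_convolution_mul_assoc (hf : Integrable f) (hg : Integrable g)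
    (hh : Integrable h) :
    ∀ᵐ t, ((f ⋆[mul ℝ ℝ] g) ⋆[mul ℝ ℝ] h) t = (f ⋆[mul ℝ ℝ] (g ⋆[mul ℝ ℝ] h)) t := by
  filter_upwards [hf.norm.ae_convolution_exists (mul ℝ ℝ)
    (hg.norm.integrable_convolution (mul ℝ ℝ) hh.norm)] with t ht
  exact convolution_assoc _ _ _ _ (fun x y z => mul_assoc x y z) hf.aestronglyMeasurable
    hg.aestronglyMeasurable hh.aestronglyMeasurable (hf.ae_convolution_exists _ hg)
    (hg.norm.ae_convolution_exists _ hh.norm) ht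

lemma conv_assoc_ae (hf : LocallyIntegrableOn f (Ici 0)) (hg : LocallyIntegrableOn g (Ici 0))
    (hh : LocallyIntegrableOn h (Ici 0)) :
    ∀ᵐ t ∂volume.restrict (Ici 0), conv (conv f g) h t = conv f (conv g h) t := by
  refine ae_restrict_Ici_of_forall_Icc fun T => ?_
  set fT := (Ioc 0 T).indicator f
  set gT := (Ioc 0 T).indicator g
  set hT := (Ioc 0 T).indicator h
  have hcausal : ∀ u : ℝ → ℝ, ∀ s ≤ 0, (Ioc 0 T).indicator u s = 0 :=
    fun u s hs => indicator_of_notMem (fun hmem => not_lt.2 hs hmem.1) u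
  have hfgT : (Ioc 0 T).indicator (conv f g) = (Ioc 0 T).indicator (fT ⋆[mul ℝ ℝ] gT) :=
    indicator_congr fun s hs => conv_eq_convolution_indicator hs.1.le hs.2
  have hghT : (Ioc 0 T).indicator (conv g h) = (Ioc 0 T).indicator (gT ⋆[mul ℝ ℝ] hT) :=
    indicator_congr fun s hs => conv_eq_convolution_indicator hs.1.le hs.2
  filter_upwards [ae_restrict_of_ae ((hf.integrable_indicator_Ioc T).ae_convolution_mul_assoc
    (hg.integrable_indicator_Ioc T) (hh.integrable_indicator_Ioc T)),
    ae_restrict_mem measurableSet_Icc] with t hassoc ht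
  rw [conv_eq_convolution_indicator ht.1 ht.2, conv_eq_convolution_indicator ht.1 ht.2, hfgT, hghT,
    convolution_indicator_Ioc_left (fun s hs => convolution_eq_zero_of_nonpos (hcausal f)
      (hcausal g) hs) (hcausal h) ht.2,
    convolution_indicator_Ioc_right (hcausal f) (fun s hs => convolution_eq_zero_of_nonpos
      (hcausal g) (hcausal h) hs) ht.2, hassoc]

end VolterraConvolution

def IsResolvent (k r : ℝ → ℝ) : Prop := ∀ t, 0 < t → r t = k t + conv k r t

namespace IsResolvent

variable {k r H Z : ℝ → ℝ}

lemma conv_ae_eq (hres : IsResolvent k r) : conv k r =ᵐ[volume.restrict (Ioi 0)] r - k :=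
  ae_restrict_of_forall_mem measurableSet_Ioi fun t ht => by
    rw [Pi.sub_apply, hres t ht]; ring

theorem conv_add_conv_ae_eq (hres : IsResolvent k r) (hk : LocallyIntegrableOn k (Ici 0))
    (hr : LocallyIntegrableOn r (Ici 0)) (hH : LocallyIntegrableOn H (Ici 0)) :
    ∀ᵐ t ∂volume.restrict (Ici 0), conv k (H + conv r H) t = conv r H t := by
  filter_upwards [conv_add_ae hk hH (hr.conv hH), conv_assoc_ae hk hr hH, conv_sub_ae hH hr hk,
    ae_restrict_mem measurableSet_Ici] with t hadd hassoc hsub ht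
  rw [hadd, ← hassoc, conv_congr_ae_left hres.conv_ae_eq ht, conv_comm (r - k), hsub, conv_comm H,
    conv_comm H]
  ring

theorem ae_eq_zero_of_eq_conv (hres : IsResolvent k r) (hk : LocallyIntegrableOn k (Ici 0))
    (hr : LocallyIntegrableOn r (Ici 0)) (hZ : LocallyIntegrableOn Z (Ici 0))
    (hZk : Z =ᵐ[volume.restrict (Ici 0)] conv k Z) : Z =ᵐ[volume.restrict (Ici 0)] 0 := by
  filter_upwards [hZk, conv_assoc_ae hr hk hZ, conv_sub_ae hZ hr hk,
    ae_restrict_mem measurableSet_Ici] with t hZt hassoc hsub ht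
  have hrZ : conv r Z t = conv r Z t - conv k Z t :=
    calc conv r Z t = conv r (conv k Z) t :=
          conv_congr_ae_right (ae_restrict_of_ae_restrict_of_subset Ioi_subset_Ici_self hZk) ht
      _ = conv (conv k r) Z t := by rw [← hassoc, conv_comm r]
      _ = conv (r - k) Z t := conv_congr_ae_left hres.conv_ae_eq ht
      _ = conv r Z t - conv k Z t := by rw [conv_comm (r - k), hsub, conv_comm Z, conv_comm Z]
  rw [hZt, Pi.zero_apply]
  linarith

end IsResolvent

lemma conv_rpow_sub_one {β δ t : ℝ} (hβ : 0 < β) (hδ : 0 < δ) (ht : 0 < t) :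
    conv (fun s => s ^ (β - 1)) (fun s => s ^ (δ - 1)) t =
      Gamma β * Gamma δ / Gamma (β + δ) * t ^ (β + δ - 1) := by
  apply Complex.ofReal_injective
  have hbeta := Complex.Gamma_mul_Gamma_eq_betaIntegral (s := δ) (t := β) (by simpa) (by simpa)
  have hΓ : Complex.Gamma ((δ + β : ℝ) : ℂ) ≠ 0 := by
    rw [Complex.Gamma_ofReal]; exact_mod_cast (Gamma_pos_of_pos (add_pos hδ hβ)).ne'
  push_cast at hΓ
  calc ((conv (fun s => s ^ (β - 1)) (fun s => s ^ (δ - 1)) t : ℝ) : ℂ)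
      = ∫ x in (0:ℝ)..t, (x : ℂ) ^ ((δ : ℂ) - 1) * ((t : ℂ) - x) ^ ((β : ℂ) - 1) := by
        rw [conv, ← intervalIntegral.integral_ofReal]
        refine intervalIntegral.integral_congr fun x hx => ?_
        rw [uIcc_of_le ht.le] at hx
        simp only [Complex.ofReal_mul, Complex.ofReal_cpow hx.1,
          Complex.ofReal_cpow (sub_nonneg.2 hx.2)]
        push_cast
        ring
    _ = (t : ℂ) ^ ((δ : ℂ) + β - 1) * Complex.betaIntegral δ β :=
        Complex.betaIntegral_scaled _ _ ht
    _ = _ := by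
        rw [show Complex.betaIntegral δ β = _ from
          (eq_div_iff hΓ).2 (by rw [mul_comm, ← hbeta])]
        push_cast [Complex.ofReal_cpow ht.le, ← Complex.Gamma_ofReal]
        ring_nf

/-- The Riemann–Liouville kernel `g_β`. -/
noncomputable def rlKernel (β t : ℝ) : ℝ := t ^ (β - 1) / Gamma β

section RiemannLiouville

variable {β δ t : ℝ}

lemma rlKernel_nonneg (hβ : 0 < β) (ht : 0 ≤ t) : 0 ≤ rlKernel β t :=
  div_nonneg (rpow_nonneg ht _) (Gamma_pos_of_pos hβ).le

lemma rlKernel_pos (hβ : 0 < β) (ht : 0 < t) : 0 < rlKernel β t :=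
  div_pos (rpow_pos_of_pos ht _) (Gamma_pos_of_pos hβ)

lemma conv_rlKernel (hβ : 0 < β) (hδ : 0 < δ) (ht : 0 < t) :
    conv (rlKernel β) (rlKernel δ) t = rlKernel (β + δ) t := by
  have hscale : conv (rlKernel β) (rlKernel δ) t =
      (Gamma β * Gamma δ)⁻¹ * conv (fun s => s ^ (β - 1)) (fun s => s ^ (δ - 1)) t := by
    rw [conv, conv, ← intervalIntegral.integral_const_mul]
    congr 1 with s
    rw [rlKernel, rlKernel]
    field_simp
  rw [hscale, conv_rpow_sub_one hβ hδ ht, rlKernel]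
  field_simp [(Gamma_pos_of_pos hβ).ne', (Gamma_pos_of_pos hδ).ne']

-- a non-integrable integrand would have integral `0`, but the integral is positive
lemma intervalIntegrable_rlKernel_conv (hβ : 0 < β) (hδ : 0 < δ) (ht : 0 < t) :
    IntervalIntegrable (fun s => rlKernel β (t - s) * rlKernel δ s) volume 0 t := by
  by_contra hint
  have := intervalIntegral.integral_undef hint
  rw [← conv, conv_rlKernel hβ hδ ht] at this
  exact (rlKernel_pos (add_pos hβ hδ) ht).ne' this

end RiemannLiouville

noncomputable def mlTerm (a g : ℝ) (m : ℕ) (t : ℝ) : ℝ :=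
  g * (-g) ^ m * rlKernel (a * (m + 1)) t

section MittagLefflerKernels

variable {a g t : ℝ}

lemma mlKernel_eq (a g : ℝ) : mlKernel a g = fun t => g * rlKernel a t := by
  ext t
  rw [mlKernel, rlKernel, mul_div_assoc]

lemma mlKernel_eq_mlTerm_zero (a g : ℝ) : mlKernel a g = mlTerm a g 0 := by
  ext t
  simp [mlKernel_eq, mlTerm]

lemma mlTerm_eq (ht : 0 < t) (m : ℕ) :
    mlTerm a g m t = g * t ^ (a - 1) * ((-g * t ^ a) ^ m / Gamma (a * m + a)) := by
  rw [mlTerm, rlKernel, show a * (m + 1) - 1 = (a - 1) + a * m by ring, rpow_add ht, rpow_mul ht.le,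
    rpow_natCast, show a * ((m : ℝ) + 1) = a * m + a by ring]
  ring

lemma hasSum_mlTerm (ha : 0 < a) (ha1 : a < 1) (ht : 0 < t) :
    HasSum (fun m => mlTerm a g m t) (mlDensity a g t) := by
  simp only [mlTerm_eq ht]
  exact (summable_pow_div_Gamma ha ha1 ha _).hasSum.mul_left _

lemma mlTerm_sub_mul_mlKernel (m : ℕ) (s : ℝ) :
    mlTerm a g m (t - s) * mlKernel a g s =
      -(g * (-g) ^ (m + 1)) * (rlKernel (a * (m + 1)) (t - s) * rlKernel a s) := by
  rw [mlKernel_eq, mlTerm]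
  ring

lemma mlTerm_succ (m : ℕ) :
    mlTerm a g (m + 1) t = g * (-g) ^ (m + 1) * rlKernel (a * (m + 1) + a) t := by
  rw [mlTerm]
  push_cast
  ring_nf

lemma integral_mlTerm_sub_mul_mlKernel (ha : 0 < a) (ht : 0 < t) (m : ℕ) :
    ∫ s in Ioo 0 t, mlTerm a g m (t - s) * mlKernel a g s = -mlTerm a g (m + 1) t := by
  simp only [mlTerm_sub_mul_mlKernel]
  rw [integral_const_mul, ← conv_eq_integral_Ioo ht.le, conv_rlKernel (by positivity) ha ht,
    mlTerm_succ]
  ring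

lemma integral_norm_mlTerm_sub_mul_mlKernel (ha : 0 < a) (ht : 0 < t) (m : ℕ) :
    ∫ s in Ioo 0 t, ‖mlTerm a g m (t - s) * mlKernel a g s‖ = |mlTerm a g (m + 1) t| := by
  have hpos : 0 < a * (m + 1) := by positivity
  rw [setIntegral_congr_fun measurableSet_Ioo (g := fun s =>
      |g * (-g) ^ (m + 1)| * (rlKernel (a * (m + 1)) (t - s) * rlKernel a s)) fun s hs => by
    rw [mlTerm_sub_mul_mlKernel, norm_mul, norm_neg, Real.norm_eq_abs, Real.norm_of_nonneg
      (mul_nonneg (rlKernel_nonneg hpos (by linarith [hs.2])) (rlKernel_nonneg ha hs.1.le))],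
    integral_const_mul, ← conv_eq_integral_Ioo ht.le, conv_rlKernel hpos ha ht, mlTerm_succ,
    abs_mul _ (rlKernel _ t), abs_of_nonneg (rlKernel_nonneg (by positivity) ht.le)]

lemma integrableOn_mlTerm_sub_mul_mlKernel (ha : 0 < a) (ht : 0 < t) (m : ℕ) :
    IntegrableOn (fun s => mlTerm a g m (t - s) * mlKernel a g s) (Ioo 0 t) := by
  simp only [mlTerm_sub_mul_mlKernel]
  exact (((intervalIntegrable_iff_integrableOn_Ioc_of_le ht.le).1
    (intervalIntegrable_rlKernel_conv (by positivity) ha ht)).mono_set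
      Ioo_subset_Ioc_self).const_mul _

theorem isResolvent_mlDensity_mlKernel (ha : 0 < a) (ha1 : a < 1) (g : ℝ) :
    IsResolvent (mlDensity a g) (mlKernel a g) := by
  intro t ht
  have hshift : HasSum (fun m => mlTerm a g (m + 1) t) (mlDensity a g t - mlKernel a g t) := by
    simpa [mlKernel_eq_mlTerm_zero] using (hasSum_nat_add_iff' 1).2 (hasSum_mlTerm ha ha1 ht)
  have hseries : ∀ s ∈ Ioo 0 t, mlDensity a g (t - s) * mlKernel a g s =
      ∑' m, mlTerm a g m (t - s) * mlKernel a g s := fun s hs =>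
    ((hasSum_mlTerm ha ha1 (sub_pos.2 hs.2)).mul_right _).tsum_eq.symm
  have hinterchange := hasSum_integral_of_summable_integral_norm
    (integrableOn_mlTerm_sub_mul_mlKernel ha ht)
    (by simpa only [integral_norm_mlTerm_sub_mul_mlKernel ha ht] using hshift.summable.abs)
  simp only [integral_mlTerm_sub_mul_mlKernel ha ht] at hinterchange
  rw [conv_eq_integral_Ioo ht.le, setIntegral_congr_fun measurableSet_Ioo hseries,
    hinterchange.unique hshift.neg]
  ring

end MittagLefflerKernels

section LocalIntegrability

variable {a g : ℝ}

lemma locallyIntegrableOn_mlKernel (ha : 0 < a) (g : ℝ) :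
    LocallyIntegrableOn (mlKernel a g) (Ici 0) := by
  refine locallyIntegrableOn_Ici_of_integrableOn_Ioc fun T => ?_
  have hrpow : mlKernel a g = fun t => g / Gamma a * t ^ (a - 1) := by
    ext t
    rw [mlKernel]
    ring
  rw [hrpow]
  exact ((intervalIntegral.intervalIntegrable_rpow' (by linarith : -1 < a - 1)).1).const_mul _

lemma locallyIntegrableOn_mlDensity (ha : 0 < a) (ha1 : a < 1) (g : ℝ) :
    LocallyIntegrableOn (mlDensity a g) (Ici 0) := by
  refine locallyIntegrableOn_Ici_of_integrableOn_Ioc fun T => ?_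
  have hmeas : AEStronglyMeasurable (mlDensity a g) (volume.restrict (Ioc 0 T)) :=
    aestronglyMeasurable_of_tendsto_ae atTop
      (f := fun n t => ∑ m ∈ Finset.range n, mlTerm a g m t)
      (fun n => by unfold mlTerm rlKernel; fun_prop) <|
      ae_restrict_of_forall_mem measurableSet_Ioc fun t ht =>
        (hasSum_mlTerm ha ha1 ht.1).tendsto_sum_nat
  have hrpow : IntegrableOn (fun t => t ^ (a - 1)) (Ioc 0 T) :=
    (intervalIntegral.intervalIntegrable_rpow' (by linarith : -1 < a - 1)).1
  set C := |g| * mittagLeffler a a (|g| * T ^ a)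
  refine Integrable.mono' (hrpow.const_mul C) hmeas ?_
  refine ae_restrict_of_forall_mem measurableSet_Ioc fun t ht => ?_
  have hE : |mittagLeffler a a (-g * t ^ a)| ≤ mittagLeffler a a (|g| * T ^ a) := by
    refine abs_mittagLeffler_le ha ha1 ha ?_
    rw [abs_mul, abs_neg, abs_of_nonneg (rpow_nonneg ht.1.le a)]
    exact mul_le_mul_of_nonneg_left (rpow_le_rpow ht.1.le ht.2 ha.le) (abs_nonneg g)
  rw [mlDensity, Real.norm_eq_abs, abs_mul, abs_mul, abs_of_nonneg (rpow_nonneg ht.1.le _)]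
  calc |g| * t ^ (a - 1) * |mittagLeffler a a (-g * t ^ a)|
      ≤ |g| * t ^ (a - 1) * mittagLeffler a a (|g| * T ^ a) :=
        mul_le_mul_of_nonneg_left hE (mul_nonneg (abs_nonneg g) (rpow_nonneg ht.1.le _))
    _ = C * t ^ (a - 1) := by ring

end LocalIntegrability

theorem variation_of_constants_for_ml_volterra_general
    (α γ : ℝ) (hα : α ∈ Set.Ioo (0:ℝ) 1)
    (H : ℝ → ℝ) (hH : ∀ T : ℝ, 0 ≤ T → IntegrableOn H (Set.Icc 0 T))
    (X : ℝ → ℝ) (hX : ∀ t : ℝ, X t = H t + conv (mlKernel α γ) H t) :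
    ((∀ T : ℝ, 0 ≤ T → IntegrableOn X (Set.Icc 0 T)) ∧
      (∀ᵐ t ∂(volume.restrict (Set.Ici (0:ℝ))), X t = H t + conv (mlDensity α γ) X t)) ∧
    (∀ Y : ℝ → ℝ, (∀ T : ℝ, 0 ≤ T → IntegrableOn Y (Set.Icc 0 T)) →
      (∀ᵐ t ∂(volume.restrict (Set.Ici (0:ℝ))), Y t = H t + conv (mlDensity α γ) Y t) →
      Y =ᵐ[volume.restrict (Set.Ici (0:ℝ))] X) := by
  have hk := locallyIntegrableOn_mlDensity hα.1 hα.2 γ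
  have hr := locallyIntegrableOn_mlKernel hα.1 γ
  have hres := isResolvent_mlDensity_mlKernel hα.1 hα.2 γ
  have hH' : LocallyIntegrableOn H (Ici 0) := locallyIntegrableOn_Ici_iff.2 hH
  obtain rfl : X = H + conv (mlKernel α γ) H := funext hX
  have hX' := hH'.add (hr.conv hH')
  have hXeq := hres.conv_add_conv_ae_eq hk hr hH'
  refine ⟨⟨locallyIntegrableOn_Ici_iff.1 hX', ?_⟩, fun Y hY hYeq => ?_⟩
  · filter_upwards [hXeq] with t ht
    rw [ht, Pi.add_apply]
  have hY' := locallyIntegrableOn_Ici_iff.2 hY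
  have hZ : Y - (H + conv (mlKernel α γ) H) =ᵐ[volume.restrict (Ici 0)]
      conv (mlDensity α γ) (Y - (H + conv (mlKernel α γ) H)) := by
    filter_upwards [hYeq, hXeq, conv_sub_ae hk hY' hX'] with t hYt hXt hsub
    rw [hsub, hXt, Pi.sub_apply, Pi.add_apply, hYt]
    ring
  filter_upwards [hres.ae_eq_zero_of_eq_conv hk hr (hY'.sub hX') hZ] with t ht
  exact sub_eq_zero.1 ht

theorem variation_of_constants_for_ml_volterra
    (α γ : ℝ) (hα : α ∈ Set.Ioo (0:ℝ) 1) (hγ : 0 < γ)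
    (H : ℝ → ℝ) (hH : ∀ T : ℝ, 0 ≤ T → IntegrableOn H (Set.Icc 0 T))
    (X : ℝ → ℝ) (hX : ∀ t : ℝ, X t = H t + conv (mlKernel α γ) H t) :
    ((∀ T : ℝ, 0 ≤ T → IntegrableOn X (Set.Icc 0 T)) ∧
      (∀ᵐ t ∂(volume.restrict (Set.Ici (0:ℝ))), X t = H t + conv (mlDensity α γ) X t)) ∧
    (∀ Y : ℝ → ℝ, (∀ T : ℝ, 0 ≤ T → IntegrableOn Y (Set.Icc 0 T)) →
      (∀ᵐ t ∂(volume.restrict (Set.Ici (0:ℝ))), Y t = H t + conv (mlDensity α γ) Y t) →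
      Y =ᵐ[volume.restrict (Set.Ici (0:ℝ))] X) :=
  variation_of_constants_for_ml_volterra_general α γ hα H hH X hX
end

section
/- Let α ∈ (0,1) and γ > 0. Then R^{α,γ} is the resolvent of the Mittag-Leffler density f^{α,γ}: for every t > 0, R^{α,γ}(t) = f^{α,γ}(t) + (f^{α,γ} * R^{α,γ})(t), i.e. γ t^{α−1}/Γ(α) = γ t^{α−1} E_{α,α}(−γ t^α) + ∫_0^t f^{α,γ}(t−s) · γ s^{α−1}/Γ(α) ds. -/
open MeasureTheory Real Filter Set

theorem Real.rpow_mul_Gamma_le_Gamma_add {z a : ℝ} (hz : 1 < z) (ha : 0 < a) :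
    (z - 1) ^ a * Gamma z ≤ Gamma (z + a) := by
  -- the slope of `log ∘ Gamma` on `[z - 1, z]` is `log (z - 1)`; slopes of convex functions grow
  have hslope := convexOn_log_Gamma.slope_mono_adjacent (x := z - 1) (y := z) (z := z + a)
    (by simp only [mem_Ioi]; linarith) (by simp only [mem_Ioi]; linarith) (by linarith)
    (by linarith)
  simp only [Function.comp_apply, sub_sub_cancel, div_one, add_sub_cancel_left,
    le_div_iff₀ ha] at hslope
  have hrec : log (Gamma z) = log (z - 1) + log (Gamma (z - 1)) := by
    rw [← log_mul (by linarith) (Gamma_pos_of_pos (by linarith)).ne', ← Gamma_add_one (by linarith),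
      sub_add_cancel]
  rw [hrec, add_sub_cancel_right] at hslope
  calc (z - 1) ^ a * Gamma z = exp (log (z - 1) * a + log (Gamma z)) := by
        rw [exp_add, exp_log (Gamma_pos_of_pos (by linarith)), rpow_def_of_pos (by linarith)]
    _ ≤ exp (log (Gamma (z + a))) := exp_le_exp.mpr (by linarith)
    _ = Gamma (z + a) := exp_log (Gamma_pos_of_pos (by linarith))

theorem summable_mittagLeffler {a : ℝ} (ha : 0 < a) (k x : ℝ) :
    Summable fun m : ℕ => x ^ m / Gamma (a * m + k) := by
  have hlin : Tendsto (fun m : ℕ => a * m + k - 1) atTop atTop :=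
    tendsto_atTop_add_const_right _ _
      (tendsto_atTop_add_const_right _ _ (tendsto_natCast_atTop_atTop.const_mul_atTop ha))
  refine summable_of_ratio_norm_eventually_le (r := 1 / 2) (by norm_num) ?_
  filter_upwards [hlin.eventually_gt_atTop 0,
    ((tendsto_rpow_atTop ha).comp hlin).eventually_ge_atTop (2 * |x|)] with m hz hbig
  set z := a * m + k
  have hΓ : 0 < Gamma z := Gamma_pos_of_pos (by linarith)
  have hpow : 0 < (z - 1) ^ a := rpow_pos_of_pos hz a
  rw [show a * ((m + 1 : ℕ) : ℝ) + k = z + a by push_cast; ring]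
  simp only [norm_div, norm_pow, norm_eq_abs, abs_of_pos hΓ,
    abs_of_pos (Gamma_pos_of_pos (by linarith : 0 < z + a))]
  rw [pow_succ]
  calc |x| ^ m * |x| / Gamma (z + a) ≤ |x| ^ m * |x| / ((z - 1) ^ a * Gamma z) :=
        div_le_div_of_nonneg_left (by positivity) (by positivity)
          (rpow_mul_Gamma_le_Gamma_add (by linarith) ha)
    _ ≤ |x| ^ m * (1 / 2 * (z - 1) ^ a) / ((z - 1) ^ a * Gamma z) := by
        gcongr
        simp only [Function.comp_apply] at hbig
        linarith
    _ = 1 / 2 * (|x| ^ m / Gamma z) := by field_simp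

theorem mittagLeffler_eq_inv_Gamma_add_mul {a : ℝ} (ha : 0 < a) (k x : ℝ) :
    mittagLeffler a k x = (Gamma k)⁻¹ + x * mittagLeffler a (k + a) x := by
  rw [mittagLeffler, (summable_mittagLeffler ha k x).tsum_eq_zero_add, mittagLeffler,
    ← tsum_mul_left]
  congr 1
  · simp
  · congr 1 with m
    rw [pow_succ', mul_div_assoc]
    congr 3
    push_cast
    ring

theorem intervalIntegrable_sub_rpow_mul_rpow {p q t : ℝ} (hp : 0 < p) (hq : 0 < q) (ht : 0 < t) :
    IntervalIntegrable (fun s => (t - s) ^ (p - 1) * s ^ (q - 1)) volume 0 t := by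
  -- Near each endpoint only one factor is singular, the other one is continuous.
  have left : ∀ p q : ℝ, 0 < q →
      IntervalIntegrable (fun s => (t - s) ^ (p - 1) * s ^ (q - 1)) volume 0 (t / 2) := by
    intro p q hq
    have hcont : ContinuousOn (fun s : ℝ => (t - s) ^ (p - 1)) (uIcc 0 (t / 2)) := by
      refine ContinuousOn.rpow_const (by fun_prop) fun s hs => Or.inl ?_
      rw [uIcc_of_le (by linarith)] at hs
      linarith [hs.2]
    exact (intervalIntegral.intervalIntegrable_rpow' (by linarith)).continuousOn_mul hcont
  have right := (left q p hp).comp_sub_left t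
  rw [sub_half, sub_zero] at right
  simp only [sub_sub_cancel] at right
  refine (left p q hq).trans ?_
  simpa only [mul_comm] using right.symm

theorem integral_sub_rpow_mul_rpow {p q t : ℝ} (hp : 0 < p) (hq : 0 < q) (ht : 0 < t) :
    ∫ s in (0:ℝ)..t, (t - s) ^ (p - 1) * s ^ (q - 1) =
      Gamma p * Gamma q / Gamma (p + q) * t ^ (p + q - 1) := by
  have hcomplex : ((∫ s in (0:ℝ)..t, (t - s) ^ (p - 1) * s ^ (q - 1) : ℝ) : ℂ) =
      ∫ s in (0:ℝ)..t, (s : ℂ) ^ ((q : ℂ) - 1) * ((t : ℂ) - s) ^ ((p : ℂ) - 1) := by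
    rw [← intervalIntegral.integral_ofReal]
    refine intervalIntegral.integral_congr fun s hs => ?_
    rw [uIcc_of_le ht.le] at hs
    simp only [Complex.ofReal_mul]
    rw [Complex.ofReal_cpow (by linarith [hs.2]), Complex.ofReal_cpow hs.1]
    push_cast
    ring
  rw [Complex.betaIntegral_scaled _ _ ht, Complex.betaIntegral_eq_Gamma_mul_div _ _ (by simpa)
    (by simpa)] at hcomplex
  apply Complex.ofReal_injective
  rw [hcomplex, ← Complex.ofReal_add]
  push_cast [Complex.ofReal_cpow ht.le, ← Complex.Gamma_ofReal]
  ring_nf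

theorem mul_rpow_pow_mul_rpow {u : ℝ} (hu : 0 < u) (c a k : ℝ) (m : ℕ) :
    (c * u ^ a) ^ m * u ^ (k - 1) = c ^ m * u ^ (a * m + k - 1) := by
  rw [mul_pow, ← rpow_mul_natCast hu.le, mul_assoc, ← rpow_add hu]
  ring_nf

theorem integral_sub_rpow_mul_mittagLeffler_mul_rpow {a k b t : ℝ} (ha : 0 < a) (hk : 0 < k)
    (hb : 0 < b) (ht : 0 < t) (c : ℝ) :
    ∫ s in (0:ℝ)..t, (t - s) ^ (k - 1) * mittagLeffler a k (c * (t - s) ^ a) * s ^ (b - 1) =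
      Gamma b * t ^ (k + b - 1) * mittagLeffler a (k + b) (c * t ^ a) := by
  set term : ℝ → ℕ → ℝ → ℝ := fun c m s =>
    c ^ m / Gamma (a * m + k) * ((t - s) ^ (a * m + k - 1) * s ^ (b - 1))
  have hkm (m : ℕ) : 0 < a * m + k := by positivity
  have expand : ∀ s ∈ Ioo 0 t, (t - s) ^ (k - 1) * mittagLeffler a k (c * (t - s) ^ a) *
      s ^ (b - 1) = ∑' m, term c m s := by
    intro s hs
    rw [mittagLeffler, ← tsum_mul_left, ← tsum_mul_right]
    congr 1 with m
    linear_combination s ^ (b - 1) / Gamma (a * m + k) *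
      mul_rpow_pow_mul_rpow (sub_pos.mpr hs.2) c a k m
  have integrable (c : ℝ) (m : ℕ) : IntegrableOn (term c m) (Ioo 0 t) := by
    have := intervalIntegrable_sub_rpow_mul_rpow (hkm m) hb ht
    exact ((intervalIntegrable_iff_integrableOn_Ioo_of_le ht.le).mp this).const_mul _
  have integral (c : ℝ) (m : ℕ) : ∫ s in Ioo 0 t, term c m s =
      Gamma b * t ^ (k + b - 1) * ((c * t ^ a) ^ m / Gamma (a * m + (k + b))) := by
    rw [integral_const_mul, ← integral_Ioc_eq_integral_Ioo, ← intervalIntegral.integral_of_le ht.le,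
      integral_sub_rpow_mul_rpow (hkm m) hb ht, ← add_assoc]
    field_simp [(Gamma_pos_of_pos (hkm m)).ne']
    rw [mul_comm (t ^ _), mul_rpow_pow_mul_rpow ht]
    ring_nf
  have norm_term (m : ℕ) : ∀ s ∈ Ioo 0 t, ‖term c m s‖ = term |c| m s := by
    intro s hs
    have := sub_pos.mpr hs.2
    simp only [term, norm_mul, norm_div, norm_pow, norm_eq_abs,
      abs_of_pos (Gamma_pos_of_pos (hkm m)),
      abs_of_pos (rpow_pos_of_pos this _), abs_of_pos (rpow_pos_of_pos hs.1 _)]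
  have summable : Summable fun m => ∫ s in Ioo 0 t, ‖term c m s‖ := by
    refine ((summable_mittagLeffler ha (k + b) (|c| * t ^ a)).mul_left
      (Gamma b * t ^ (k + b - 1))).congr fun m => ?_
    rw [setIntegral_congr_fun measurableSet_Ioo (norm_term m), integral]
  rw [intervalIntegral.integral_of_le ht.le, integral_Ioc_eq_integral_Ioo,
    setIntegral_congr_fun measurableSet_Ioo expand,
    ← integral_tsum_of_summable_integral_norm (integrable c) summable, tsum_congr (integral c),
    tsum_mul_left, mittagLeffler]

theorem mlKernel_is_resolvent_of_mlDensity_general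
    (α γ : ℝ) (hα : α ∈ Set.Ioo (0:ℝ) 1) :
    ∀ t : ℝ, 0 < t →
      γ * t ^ (α - 1) / Real.Gamma α =
        mlDensity α γ t +
          ∫ s in (0:ℝ)..t, mlDensity α γ (t - s) * (γ * s ^ (α - 1) / Real.Gamma α) := by
  intro t ht
  have hΓ : Gamma α ≠ 0 := (Gamma_pos_of_pos hα.1).ne'
  have hconv : ∫ s in (0:ℝ)..t, mlDensity α γ (t - s) * (γ * s ^ (α - 1) / Gamma α) =
      γ ^ 2 * t ^ (α + α - 1) * mittagLeffler α (α + α) (-γ * t ^ α) := calc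
    _ = γ ^ 2 / Gamma α * ∫ s in (0:ℝ)..t,
          (t - s) ^ (α - 1) * mittagLeffler α α (-γ * (t - s) ^ α) * s ^ (α - 1) := by
      rw [← intervalIntegral.integral_const_mul]
      congr 1 with s
      rw [mlDensity]
      ring
    _ = _ := by
      rw [integral_sub_rpow_mul_mittagLeffler_mul_rpow hα.1 hα.1 hα.1 ht]
      field_simp
  rw [hconv, mlDensity, mittagLeffler_eq_inv_Gamma_add_mul hα.1 α, add_sub_right_comm,
    rpow_add ht]
  field_simp
  ring

theorem mlKernel_is_resolvent_of_mlDensity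
    (α γ : ℝ) (hα : α ∈ Set.Ioo (0:ℝ) 1) (hγ : 0 < γ) :
    ∀ t : ℝ, 0 < t →
      γ * t ^ (α - 1) / Real.Gamma α =
        mlDensity α γ t +
          ∫ s in (0:ℝ)..t, mlDensity α γ (t - s) * (γ * s ^ (α - 1) / Real.Gamma α) :=
  mlKernel_is_resolvent_of_mlDensity_general α γ hα
end

section
/- Let α ∈ (1/2,1), σ > 0 and φ(t) = ασ(1+σt)^{-(α+1)}. For every t ≥ 0, the series ∑_{k=1}^∞ φ^{*k}(t) of convolution powers of φ converges to a finite value R_α(t). -/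
open MeasureTheory Real Filter Set

/-! φ is bounded by `ασ` on `[0,∞)`, and a kernel bounded by `M` has
`|f^{*(k+1)}(t)| ≤ M (M t)^k / k!`, so the series is dominated by `M e^{M t}`. -/

open Nat in
theorem integral_mul_pow_div_factorial (M t : ℝ) (k : ℕ) :
    ∫ u in (0:ℝ)..t, M * (M * u) ^ k / k ! = (M * t) ^ (k + 1) / (k + 1)! := by
  have hrw : ∀ u : ℝ, M * (M * u) ^ k / k ! = M ^ (k + 1) / k ! * u ^ k := fun u => by ring
  simp_rw [hrw]
  rw [intervalIntegral.integral_const_mul, integral_pow, Nat.factorial_succ]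
  push_cast
  field_simp
  ring

theorem abs_conv_le {f g G : ℝ → ℝ} {M t : ℝ} (ht : 0 ≤ t)
    (hf : ∀ u ∈ Icc 0 t, |f u| ≤ M) (hg : ∀ u ∈ Icc 0 t, |g u| ≤ G u)
    (hG : IntervalIntegrable G volume 0 t) :
    |conv f g t| ≤ |∫ u in (0:ℝ)..t, M * G u| := by
  refine intervalIntegral.norm_integral_le_abs_of_norm_le (f := fun u => f (t - u) * g u) ?_
    (hG.const_mul M)
  refine (ae_restrict_iff' measurableSet_uIoc).mpr (ae_of_all _ fun u hu => ?_)
  rw [uIoc_of_le ht] at hu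
  have hf' := hf (t - u) ⟨by linarith [hu.2], by linarith [hu.1]⟩
  have hg' := hg u ⟨hu.1.le, hu.2⟩
  rw [norm_mul, Real.norm_eq_abs, Real.norm_eq_abs]
  exact mul_le_mul hf' hg' (abs_nonneg _) ((abs_nonneg _).trans hf')

section BoundedKernel

variable {f : ℝ → ℝ} {M : ℝ}

open Nat in
theorem abs_convPow_le (hf : ∀ u, 0 ≤ u → |f u| ≤ M) (k : ℕ) {t : ℝ} (ht : 0 ≤ t) :
    |convPow f k t| ≤ M * (M * t) ^ k / k ! := by
  have hM : 0 ≤ M := (abs_nonneg _).trans (hf 0 le_rfl)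
  induction k generalizing t with
  | zero => simpa [convPow] using hf t ht
  | succ k ih =>
    have hG : IntervalIntegrable (fun u => M * (M * u) ^ k / k !) volume 0 t :=
      (by fun_prop : Continuous fun u : ℝ => M * (M * u) ^ k / k !).intervalIntegrable 0 t
    calc |convPow f (k + 1) t|
        ≤ |∫ u in (0:ℝ)..t, M * (M * (M * u) ^ k / k !)| :=
          abs_conv_le ht (fun u hu => hf u hu.1) (fun u hu => ih hu.1) hG
      _ = M * (M * t) ^ (k + 1) / (k + 1)! := by
          rw [intervalIntegral.integral_const_mul, integral_mul_pow_div_factorial, ← mul_div_assoc,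
            abs_of_nonneg (by positivity)]

theorem summable_convPow_of_abs_le (hf : ∀ u, 0 ≤ u → |f u| ≤ M) {t : ℝ} (ht : 0 ≤ t) :
    Summable fun k => convPow f k t := by
  refine Summable.of_norm_bounded ((summable_pow_div_factorial (M * t)).mul_left M) fun k => ?_
  rw [Real.norm_eq_abs, ← mul_div_assoc]
  exact abs_convPow_le hf k ht

end BoundedKernel

theorem convolution_power_series_summable
    (α σ : ℝ) (hα : α ∈ Set.Ioo (1/2 : ℝ) 1) (hσ : 0 < σ)
    (φ : ℝ → ℝ) (hφ : ∀ t : ℝ, φ t = α * σ * (1 + σ * t) ^ (-(α + 1))) :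
    ∀ t : ℝ, 0 ≤ t → Summable (fun k : ℕ => convPow φ k t) := by
  have hα0 : 0 < α := by linarith [hα.1]
  have hφ_le : ∀ u, 0 ≤ u → |φ u| ≤ α * σ := fun u hu => by
    have hbase : 1 ≤ 1 + σ * u := by nlinarith
    have hpow : (1 + σ * u) ^ (-(α + 1)) ≤ 1 :=
      rpow_le_one_of_one_le_of_nonpos hbase (by linarith)
    rw [hφ u, abs_of_nonneg (by positivity)]
    exact mul_le_of_le_one_right (by positivity) hpow
  exact fun t ht => summable_convPow_of_abs_le hφ_le ht
end

section
/- Let α ∈ (1/2,1), σ > 0 and φ(t) = ασ(1+σt)^{-(α+1)}. Then for every λ > 0, lim_{n→∞} n^α ( 1 − L_φ(λ/n) ) = Γ(1−α) λ^α / σ^α, where L_φ(μ) = ∫_0^∞ e^{−μt} φ(t) dt. -/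
/-!
Integrating by parts, `1 - L_φ(μ) = μ ∫₀^∞ e^{-μt} (1 + σt)^{-α} dt`. At `μ = l/n` the substitution
`t = n u` turns `n^α (1 - L_φ(l/n))` into `l ∫₀^∞ e^{-lu} (1/n + σu)^{-α} du`, which by dominated
convergence (with the integrable majorant `e^{-lu} (σu)^{-α}`, as `α < 1`) tends to
`l ∫₀^∞ e^{-lu} (σu)^{-α} du = l σ^{-α} l^{α-1} Γ(1-α)`.
-/

open MeasureTheory Real Filter Set

/-- The Laplace transform `L_f(l) = ∫_0^∞ e^{-l t} f(t) dt`. -/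
noncomputable def laplace (f : ℝ → ℝ) (l : ℝ) : ℝ := ∫ t in Set.Ioi (0:ℝ), Real.exp (-(l * t)) * f t

open Topology

section OneAddMulRpow

variable {σ α μ : ℝ}

lemma one_add_mul_rpow_neg_le_one (hσ : 0 ≤ σ) (hα : 0 ≤ α) {t : ℝ} (ht : 0 ≤ t) :
    (1 + σ * t) ^ (-α) ≤ 1 :=
  rpow_le_one_of_one_le_of_nonpos (by nlinarith) (by linarith)

lemma exp_neg_mul_mul_one_add_mul_rpow_neg_le (hσ : 0 ≤ σ) (hα : 0 ≤ α) {t : ℝ} (ht : 0 ≤ t) :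
    ‖exp (-(μ * t)) * (1 + σ * t) ^ (-α)‖ ≤ exp (-(μ * t)) := by
  rw [norm_of_nonneg (by positivity)]
  exact mul_le_of_le_one_right (exp_pos _).le (one_add_mul_rpow_neg_le_one hσ hα ht)

lemma integrableOn_exp_neg_mul_mul_one_add_mul_rpow_neg (hσ : 0 ≤ σ) (hα : 0 ≤ α) (hμ : 0 < μ) :
    IntegrableOn (fun t => exp (-(μ * t)) * (1 + σ * t) ^ (-α)) (Ioi 0) := by
  have hcont : ContinuousOn (fun t => exp (-(μ * t)) * (1 + σ * t) ^ (-α)) (Ioi 0) :=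
    ContinuousOn.mul (by fun_prop) <| ContinuousOn.rpow_const (by fun_prop)
      fun t (ht : 0 < t) => Or.inl (by positivity)
  refine (exp_neg_integrableOn_Ioi 0 hμ).mono' (hcont.aestronglyMeasurable measurableSet_Ioi) ?_
  filter_upwards [ae_restrict_mem measurableSet_Ioi] with t ht
  simpa using exp_neg_mul_mul_one_add_mul_rpow_neg_le (μ := μ) hσ hα (le_of_lt ht)

lemma tendsto_exp_neg_mul_mul_one_add_mul_rpow_neg_atTop (hσ : 0 ≤ σ) (hα : 0 ≤ α) (hμ : 0 < μ) :
    Tendsto (fun t => exp (-(μ * t)) * (1 + σ * t) ^ (-α)) atTop (𝓝 0) := by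
  have hexp : Tendsto (fun t => exp (-(μ * t))) atTop (𝓝 0) :=
    tendsto_exp_atBot.comp (tendsto_neg_atTop_atBot.comp (tendsto_id.const_mul_atTop hμ))
  refine squeeze_zero_norm' ?_ hexp
  filter_upwards [eventually_ge_atTop 0] with t ht
  exact exp_neg_mul_mul_one_add_mul_rpow_neg_le hσ hα ht

lemma hasDerivAt_exp_neg_mul_mul_one_add_mul_rpow_neg {t : ℝ} (ht : 0 < 1 + σ * t) :
    HasDerivAt (fun t => exp (-(μ * t)) * (1 + σ * t) ^ (-α))
      (-(μ * (exp (-(μ * t)) * (1 + σ * t) ^ (-α)))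
        - exp (-(μ * t)) * (α * σ * (1 + σ * t) ^ (-(α + 1)))) t := by
  have hexp : HasDerivAt (fun t => exp (-(μ * t))) (exp (-(μ * t)) * -μ) t :=
    (hasDerivAt_exp _).comp t (by simpa using (hasDerivAt_id t).const_mul (-μ))
  have hpow : HasDerivAt (fun t => (1 + σ * t) ^ (-α)) (σ * -α * (1 + σ * t) ^ (-α - 1)) t :=
    (by simpa using ((hasDerivAt_id t).const_mul σ).const_add 1 : HasDerivAt _ σ t).rpow_const
      (Or.inl ht.ne')
  rw [show -α - 1 = -(α + 1) by ring] at hpow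
  exact (hexp.mul hpow).congr_deriv (by ring)

end OneAddMulRpow

/-- `φ(t) = α σ (1 + σt)^{-(α+1)}` is minus the derivative of `(1 + σt)^{-α}`, and
`e^{-μt} (1 + σt)^{-α}` goes from `1` at `t = 0` to `0` at infinity. -/
lemma one_sub_laplace_eq_integral {α σ μ : ℝ} (hα : 0 ≤ α) (hσ : 0 ≤ σ) (hμ : 0 < μ) :
    1 - laplace (fun t => α * σ * (1 + σ * t) ^ (-(α + 1))) μ
      = μ * ∫ t in Ioi 0, exp (-(μ * t)) * (1 + σ * t) ^ (-α) := by
  have hint₁ := (integrableOn_exp_neg_mul_mul_one_add_mul_rpow_neg hσ hα hμ).const_mul μ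
  have hint₂ :
      IntegrableOn (fun t => exp (-(μ * t)) * (α * σ * (1 + σ * t) ^ (-(α + 1)))) (Ioi 0) :=
    IntegrableOn.congr_fun ((integrableOn_exp_neg_mul_mul_one_add_mul_rpow_neg (α := α + 1) hσ
      (by linarith) hμ).const_mul (α * σ)) (fun t _ => by ring) measurableSet_Ioi
  have hftc := integral_Ioi_of_hasDerivAt_of_tendsto'
    (fun t (ht : 0 ≤ t) => hasDerivAt_exp_neg_mul_mul_one_add_mul_rpow_neg (α := α) (μ := μ)
      (by positivity)) (hint₁.neg.sub hint₂)
    (tendsto_exp_neg_mul_mul_one_add_mul_rpow_neg_atTop hσ hα hμ)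
  rw [integral_sub (by exact hint₁.neg) hint₂, integral_neg, integral_const_mul] at hftc
  simp only [laplace, mul_zero, neg_zero, exp_zero, add_zero, one_rpow, mul_one] at hftc ⊢
  linarith

lemma integral_exp_neg_div_mul_mul_one_add_mul_rpow_neg (α l : ℝ) {σ N : ℝ} (hσ : 0 ≤ σ)
    (hN : 0 < N) :
    ∫ t in Ioi 0, exp (-(l / N * t)) * (1 + σ * t) ^ (-α)
      = N ^ (1 - α) * ∫ u in Ioi 0, exp (-(l * u)) * (N⁻¹ + σ * u) ^ (-α) := by
  have hsub := integral_comp_mul_left_Ioi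
    (fun t => exp (-(l / N * t)) * (1 + σ * t) ^ (-α)) 0 hN
  rw [mul_zero, smul_eq_mul, eq_inv_mul_iff_mul_eq₀ hN.ne'] at hsub
  rw [← hsub, rpow_sub hN, rpow_one, ← integral_const_mul, ← integral_const_mul]
  refine setIntegral_congr_fun measurableSet_Ioi fun u (hu : 0 < u) => ?_
  rw [show N⁻¹ + σ * u = N⁻¹ * (1 + σ * (N * u)) by field_simp,
    mul_rpow (inv_nonneg.2 hN.le) (by positivity), inv_rpow hN.le, rpow_neg hN.le, inv_inv,
    show l / N * (N * u) = l * u by field_simp]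
  field_simp [(rpow_pos_of_pos hN α).ne']

lemma rpow_mul_one_sub_laplace_div_eq {α σ : ℝ} (hα : 0 ≤ α) (hσ : 0 ≤ σ) {l N : ℝ} (hl : 0 < l)
    (hN : 0 < N) :
    N ^ α * (1 - laplace (fun t => α * σ * (1 + σ * t) ^ (-(α + 1))) (l / N))
      = l * ∫ u in Ioi 0, exp (-(l * u)) * (N⁻¹ + σ * u) ^ (-α) := by
  rw [one_sub_laplace_eq_integral hα hσ (div_pos hl hN),
    integral_exp_neg_div_mul_mul_one_add_mul_rpow_neg α l hσ hN, rpow_sub hN, rpow_one,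
    ← mul_assoc, ← mul_assoc]
  congr 1
  field_simp [(rpow_pos_of_pos hN α).ne']

section GammaIntegral

variable {α σ l : ℝ}

lemma integrableOn_exp_neg_mul_mul_mul_rpow_neg (hα : α < 1) (hσ : 0 ≤ σ) (hl : 0 < l) :
    IntegrableOn (fun u => exp (-(l * u)) * (σ * u) ^ (-α)) (Ioi 0) := by
  refine IntegrableOn.congr_fun ((integrableOn_rpow_mul_exp_neg_mul_rpow (s := -α) (by linarith)
    one_pos hl).const_mul (σ ^ (-α))) (fun u (hu : 0 < u) => ?_) measurableSet_Ioi
  rw [mul_rpow hσ hu.le, rpow_one, neg_mul]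
  ring

lemma integral_exp_neg_mul_mul_mul_rpow_neg (hα : α < 1) (hσ : 0 ≤ σ) (hl : 0 < l) :
    ∫ u in Ioi 0, exp (-(l * u)) * (σ * u) ^ (-α) = σ ^ (-α) * l ^ (α - 1) * Gamma (1 - α) := by
  have hGamma := integral_rpow_mul_exp_neg_mul_Ioi (sub_pos.2 hα) hl
  rw [show 1 - α - 1 = -α by ring, one_div, inv_rpow hl.le, ← rpow_neg hl.le, neg_sub] at hGamma
  rw [mul_assoc, ← hGamma, ← integral_const_mul]
  refine setIntegral_congr_fun measurableSet_Ioi fun u (hu : 0 < u) => ?_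
  rw [mul_rpow hσ hu.le]
  ring

lemma tendsto_integral_exp_neg_mul_mul_add_mul_rpow_neg (hα₀ : 0 ≤ α) (hα : α < 1) (hσ : 0 < σ)
    (hl : 0 < l) :
    Tendsto (fun ε => ∫ u in Ioi 0, exp (-(l * u)) * (ε + σ * u) ^ (-α)) (𝓝[>] 0)
      (𝓝 (∫ u in Ioi 0, exp (-(l * u)) * (σ * u) ^ (-α))) := by
  refine tendsto_integral_filter_of_dominated_convergence _ ?_ ?_
    (integrableOn_exp_neg_mul_mul_mul_rpow_neg hα hσ.le hl) ?_
  · filter_upwards [self_mem_nhdsWithin] with ε (hε : 0 < ε)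
    refine ContinuousOn.aestronglyMeasurable (ContinuousOn.mul (by fun_prop) ?_) measurableSet_Ioi
    exact ContinuousOn.rpow_const (by fun_prop) fun u (hu : 0 < u) => Or.inl (by positivity)
  · filter_upwards [self_mem_nhdsWithin] with ε (hε : 0 < ε)
    filter_upwards [ae_restrict_mem measurableSet_Ioi] with u (hu : 0 < u)
    rw [norm_of_nonneg (by positivity)]
    exact mul_le_mul_of_nonneg_left
      (rpow_le_rpow_of_nonpos (by positivity) (by linarith) (by linarith)) (exp_pos _).le
  · filter_upwards [ae_restrict_mem measurableSet_Ioi] with u (hu : 0 < u)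
    have hcont : ContinuousAt (fun ε => (ε + σ * u) ^ (-α)) 0 :=
      (continuous_add_const (σ * u)).continuousAt.rpow_const
        (Or.inl (by simp only [zero_add]; positivity))
    simpa using (tendsto_const_nhds.mul hcont.tendsto).mono_left nhdsWithin_le_nhds

end GammaIntegral

theorem asymptotics_of_laplace_transform_of_kernel
    (α σ : ℝ) (hα : α ∈ Set.Ioo (1/2 : ℝ) 1) (hσ : 0 < σ)
    (φ : ℝ → ℝ) (hφ : ∀ t : ℝ, φ t = α * σ * (1 + σ * t) ^ (-(α + 1))) :
    ∀ l : ℝ, 0 < l →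
      Tendsto (fun n : ℕ => (n : ℝ) ^ α * (1 - laplace φ (l / (n : ℝ))))
        atTop (nhds (Real.Gamma (1 - α) * l ^ α / σ ^ α)) := by
  have hα₀ : 0 ≤ α := by linarith [hα.1]
  intro l hl
  have hlim := ((tendsto_integral_exp_neg_mul_mul_add_mul_rpow_neg hα₀ hα.2 hσ hl).comp
    (tendsto_inv_atTop_nhdsGT_zero.comp tendsto_natCast_atTop_atTop)).const_mul l
  rw [integral_exp_neg_mul_mul_mul_rpow_neg hα.2 hσ.le hl] at hlim
  convert hlim.congr' ?_ using 2
  · rw [rpow_neg hσ.le, rpow_sub hl, rpow_one]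
    field_simp
  · filter_upwards [eventually_gt_atTop 0] with n hn
    rw [funext hφ, rpow_mul_one_sub_laplace_div_eq hα₀ hσ.le hl (Nat.cast_pos.2 hn)]
    rfl
end
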